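/- Let m ∈ ℓ∞(I) and let R = {R_i} ∈ C₀(I,B(H)) (i.e. for every ε > 0 there is a finite set J ⊆ I with ‖R_i‖ < ε for all i ∉ J) be such that every R_i has finite rank and sup_{i∈I} rank(R_i) < ∞. Then the diagonal operator D_{mR} : 𝔥 → 𝔥 is compact; in particular, for any Bessel fusion sequences (W,ω) and (V,υ) the Bessel fusion multiplier M_{mR,V,W} is a compact operator on H. -/

import Mathlib

noncomputable section

open ContinuousLinearMap

/-- Orthogonal projection onto a closed subspace, as an operator on `H`. -/
def fproj {H : Type*} [NormedAddCommGroup H] [InnerProductSpace ℂ H] [CompleteSpace H]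
    (W : Submodule ℂ H) (hW : IsClosed (W : Set H)) : H →L[ℂ] H :=
  haveI : CompleteSpace W := hW.completeSpace_coe
  W.subtypeL.comp (Submodule.orthogonalProjectionOnto W)

/-! Truncating `D_{mR}` to finitely many coordinates gives finite sums of the operators
`x ↦ single i (m_i R_i x_i)`, each compact because `R_i` has finite rank. Since `‖m_i R_i‖ → 0`
along the cofinite filter, the truncations converge to `D_{mR}` in operator norm, and norm limits
of compact operators are compact. The multiplier factors as `T*_{V,υ} ∘ D_{mR} ∘ T_{W,ω}` through
the analysis operators of the two Bessel fusion sequences, so it is compact as well. -/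

open Filter Topology
open scoped ENNReal

theorem ContinuousLinearMap.isCompactOperator_of_finiteDimensional_range
    {𝕜 E F : Type*} [NontriviallyNormedField 𝕜] [LocallyCompactSpace 𝕜]
    [NormedAddCommGroup E] [NormedSpace 𝕜 E] [NormedAddCommGroup F] [NormedSpace 𝕜 F]
    (f : E →L[𝕜] F) [FiniteDimensional 𝕜 (LinearMap.range (f : E →ₗ[𝕜] F))] :
    IsCompactOperator f := by
  set S := LinearMap.range (f : E →ₗ[𝕜] F)
  have := FiniteDimensional.proper 𝕜 S
  exact (isCompactOperator_of_locallyCompactSpace_dom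
    (f.codRestrict S (LinearMap.mem_range_self (f : E →ₗ[𝕜] F)))).clm_comp S.subtypeL

namespace lp

variable {𝕜 ι : Type*} [RCLike 𝕜] {E F : ι → Type*}
  [∀ i, NormedAddCommGroup (E i)] [∀ i, NormedSpace 𝕜 (E i)]
  [∀ i, NormedAddCommGroup (F i)] [∀ i, NormedSpace 𝕜 (F i)] {p : ℝ≥0∞} [Fact (1 ≤ p)]

theorem opNorm_le_of_forall_norm_apply_le {T : lp E p →L[𝕜] lp F p} {C : ℝ} (hC : 0 ≤ C)
    (hT : ∀ x i, ‖T x i‖ ≤ C * ‖x i‖) : ‖T‖ ≤ C := by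
  have hp : p ≠ 0 := (zero_lt_one.trans_le Fact.out).ne'
  have hCnorm : ‖(C : 𝕜)‖ = C := by rw [RCLike.norm_ofReal, abs_of_nonneg hC]
  refine T.opNorm_le_bound hC fun x => ?_
  calc ‖T x‖ ≤ ‖(C : 𝕜) • x‖ := lp.norm_mono hp fun i => by
        rw [lp.coeFn_smul, Pi.smul_apply, norm_smul, hCnorm]
        exact hT x i
    _ = C * ‖x‖ := by rw [norm_smul, hCnorm]

section Truncation

variable [DecidableEq ι]

def diagonalOn (A : ∀ i, E i →L[𝕜] F i) (s : Finset ι) : lp E p →L[𝕜] lp F p :=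
  ∑ i ∈ s, (singleContinuousLinearMap 𝕜 F p i).comp ((A i).comp (evalCLM 𝕜 E p i))

theorem diagonalOn_apply (A : ∀ i, E i →L[𝕜] F i) (s : Finset ι) (x : lp E p) (j : ι) :
    diagonalOn A s x j = if j ∈ s then A j (x j) else 0 := by
  rw [diagonalOn, sum_apply, lp.coeFn_sum, Finset.sum_apply]
  simp only [comp_apply, singleContinuousLinearMap_apply, lp.single_apply]
  exact Finset.sum_pi_single j (fun i => A i (x i)) s

theorem isCompactOperator_diagonalOn {A : ∀ i, E i →L[𝕜] F i}
    (hA : ∀ i, IsCompactOperator (A i)) (s : Finset ι) :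
    IsCompactOperator (diagonalOn (p := p) A s) :=
  (compactOperator _ _ _).sum_mem fun i _ =>
    show IsCompactOperator _ by
      simpa only [coe_comp] using ((hA i).comp_clm (evalCLM 𝕜 E p i)).clm_comp _

theorem tendsto_diagonalOn {A : ∀ i, E i →L[𝕜] F i}
    (hA : Tendsto (fun i => ‖A i‖) cofinite (𝓝 0)) {D : lp E p →L[𝕜] lp F p}
    (hD : ∀ x i, D x i = A i (x i)) : Tendsto (diagonalOn A) atTop (𝓝 D) := by
  refine Metric.tendsto_atTop.2 fun ε hε => ?_
  have hsmall : {i | ¬ ‖A i‖ ≤ ε / 2}.Finite :=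
    eventually_cofinite.1 (hA.eventually (ge_mem_nhds (half_pos hε)))
  refine ⟨hsmall.toFinset, fun s hs => ?_⟩
  rw [dist_eq_norm']
  refine (opNorm_le_of_forall_norm_apply_le (half_pos hε).le fun x i => ?_).trans_lt
    (half_lt_self hε)
  rw [sub_apply, lp.coeFn_sub, Pi.sub_apply, hD, diagonalOn_apply]
  split_ifs with hi
  · simpa using mul_nonneg (half_pos hε).le (norm_nonneg (x i))
  · rw [sub_zero]
    refine (A i).le_of_opNorm_le ?_ (x i)
    by_contra h
    exact hi (hs (hsmall.mem_toFinset.2 h))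

end Truncation

theorem isCompactOperator_of_diagonal [∀ i, CompleteSpace (F i)] {A : ∀ i, E i →L[𝕜] F i}
    (hA : ∀ i, IsCompactOperator (A i)) (hA0 : Tendsto (fun i => ‖A i‖) cofinite (𝓝 0))
    {D : lp E p →L[𝕜] lp F p} (hD : ∀ x i, D x i = A i (x i)) : IsCompactOperator D := by
  classical
  exact isCompactOperator_of_tendsto (tendsto_diagonalOn hA0 hD)
    (Eventually.of_forall (isCompactOperator_diagonalOn hA))

end lp

section Bessel

variable {𝕜 ι E : Type*} [RCLike 𝕜] {F : ι → Type*}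

def IsBesselFamily [NormedAddCommGroup E] [∀ i, NormedAddCommGroup (F i)]
    [NormedSpace 𝕜 E] [∀ i, NormedSpace 𝕜 (F i)] (Q : ∀ i, E →L[𝕜] F i) (β : ℝ) : Prop :=
  ∀ x, ∃ s, HasSum (fun i => ‖Q i x‖ ^ 2) s ∧ s ≤ β * ‖x‖ ^ 2

namespace IsBesselFamily

section Normed

variable [NormedAddCommGroup E] [∀ i, NormedAddCommGroup (F i)]
  [NormedSpace 𝕜 E] [∀ i, NormedSpace 𝕜 (F i)] {Q : ∀ i, E →L[𝕜] F i} {β : ℝ}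

theorem memℓp (hQ : IsBesselFamily Q β) (x : E) : Memℓp (fun i => Q i x) 2 := by
  obtain ⟨s, hs, -⟩ := hQ x
  refine memℓp_gen ?_
  simpa using hs.summable

theorem norm_mk_le (hQ : IsBesselFamily Q β) (x : E) :
    ‖(⟨fun i => Q i x, hQ.memℓp x⟩ : lp F 2)‖ ≤ √(max β 0) * ‖x‖ := by
  obtain ⟨s, hs, hsβ⟩ := hQ x
  refine lp.norm_le_of_tsum_le (by norm_num) (by positivity) ?_
  have : ∑' i, ‖Q i x‖ ^ 2 ≤ max β 0 * ‖x‖ ^ 2 :=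
    hs.tsum_eq ▸ hsβ.trans (by gcongr; exact le_max_left β 0)
  simpa [mul_pow, Real.sq_sqrt (le_max_right β 0)] using this

def analysisOp (hQ : IsBesselFamily Q β) : E →L[𝕜] lp F 2 :=
  LinearMap.mkContinuous
    { toFun x := ⟨fun i => Q i x, hQ.memℓp x⟩
      map_add' x y := by ext i; exact map_add (Q i) x y
      map_smul' c x := by ext i; exact map_smul (Q i) c x }
    (√(max β 0)) hQ.norm_mk_le

@[simp]
theorem analysisOp_apply (hQ : IsBesselFamily Q β) (x : E) (i : ι) :
    hQ.analysisOp x i = Q i x :=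
  rfl

end Normed

theorem adjoint_analysisOp_apply [NormedAddCommGroup E] [InnerProductSpace 𝕜 E] [CompleteSpace E]
    [∀ i, NormedAddCommGroup (F i)] [∀ i, InnerProductSpace 𝕜 (F i)] [∀ i, CompleteSpace (F i)]
    {Q : ∀ i, E →L[𝕜] F i} {β : ℝ} (hQ : IsBesselFamily Q β) {y : lp F 2} {v : E}
    (hv : HasSum (fun i => adjoint (Q i) (y i)) v) : adjoint hQ.analysisOp y = v := by
  refine ext_inner_left 𝕜 fun z => ?_
  rw [adjoint_inner_right]
  refine (lp.hasSum_inner _ _).unique ?_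
  simpa only [innerSL_apply_apply, adjoint_inner_right, analysisOp_apply] using
    hv.mapL (innerSL 𝕜 z)

end IsBesselFamily

end Bessel

section Fusion

variable {H : Type*} [NormedAddCommGroup H] [InnerProductSpace ℂ H] [CompleteSpace H]

theorem adjoint_ofReal_smul_fproj (c : ℝ) (W : Submodule ℂ H) (hW : IsClosed (W : Set H)) :
    adjoint ((c : ℂ) • fproj W hW) = (c : ℂ) • fproj W hW := by
  have := hW.completeSpace_coe
  have hP : adjoint (fproj W hW) = fproj W hW := isSelfAdjoint_starProjection W
  rw [LinearIsometryEquiv.map_smulₛₗ, hP, Complex.conj_ofReal]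

theorem isBesselFamily_ofReal_smul_fproj {ι : Type*} {W : ι → Submodule ℂ H}
    (hW : ∀ i, IsClosed (W i : Set H)) {ω : ι → ℝ} {β : ℝ}
    (h : ∀ x, ∃ s, HasSum (fun i => ω i ^ 2 * ‖fproj (W i) (hW i) x‖ ^ 2) s ∧ s ≤ β * ‖x‖ ^ 2) :
    IsBesselFamily (fun i => (ω i : ℂ) • fproj (W i) (hW i)) β := by
  simpa only [IsBesselFamily, smul_apply, norm_smul, Complex.norm_real, Real.norm_eq_abs,
    mul_pow, sq_abs] using h

end Fusion

theorem multiplier_compact_of_C0_operator_family_general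
    {H : Type*} [NormedAddCommGroup H] [InnerProductSpace ℂ H] [CompleteSpace H]
    {I : Type*}
    (m : I → ℂ)
    (hm : BddAbove (Set.range fun i => ‖m i‖))
    (R : I → H →L[ℂ] H)
    (hR0 : ∀ ε : ℝ, 0 < ε → ∃ F : Finset I, ∀ i ∉ F, ‖R i‖ < ε)
    (hfin : ∀ i, FiniteDimensional ℂ ↥(LinearMap.range (R i : H →ₗ[ℂ] H)))
    -- the diagonal operator D_{mR}
    (D : lp (fun _ : I => H) 2 →L[ℂ] lp (fun _ : I => H) 2)
    (hD : ∀ (x : lp (fun _ : I => H) 2) (i : I), D x i = m i • (R i) (x i)) :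
    IsCompactOperator ⇑D ∧
    -- and every (m,R)-Bessel fusion multiplier is compact
    (∀ (W V : I → Submodule ℂ H)
      (hW : ∀ i, IsClosed ((W i) : Set H)) (hV : ∀ i, IsClosed ((V i) : Set H))
      (ω υ : I → ℝ),
      (∀ i, 0 ≤ ω i ∧ (ω i = 0 ↔ W i = ⊥)) →
      (∀ i, 0 ≤ υ i ∧ (υ i = 0 ↔ V i = ⊥)) →
      (∃ βW : ℝ, ∀ x : H, ∃ s : ℝ,
        HasSum (fun i => ω i ^ 2 * ‖fproj (W i) (hW i) x‖ ^ 2) s ∧ s ≤ βW * ‖x‖ ^ 2) →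
      (∃ βV : ℝ, ∀ x : H, ∃ s : ℝ,
        HasSum (fun i => υ i ^ 2 * ‖fproj (V i) (hV i) x‖ ^ 2) s ∧ s ≤ βV * ‖x‖ ^ 2) →
      ∀ M : H →L[ℂ] H,
        (∀ x : H, HasSum
          (fun i => m i • (υ i * ω i) • fproj (V i) (hV i) ((R i) (fproj (W i) (hW i) x)))
          (M x)) →
        IsCompactOperator ⇑M) := by
  have hR_tendsto : Tendsto R cofinite (𝓝 0) := by
    refine NormedAddGroup.tendsto_nhds_zero.2 fun ε hε => ?_
    obtain ⟨F, hF⟩ := hR0 ε hε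
    exact eventually_cofinite.2 (F.finite_toSet.subset fun i hi => not_not.1 (mt (hF i) hi))
  have hmR : Tendsto (fun i => ‖m i • R i‖) cofinite (𝓝 0) :=
    tendsto_zero_iff_norm_tendsto_zero.1 (hm.isBoundedUnder_of_range.smul_tendsto_zero hR_tendsto)
  have hmR_compact : ∀ i, IsCompactOperator (m i • R i) := fun i =>
    have := hfin i
    (R i).isCompactOperator_of_finiteDimensional_range.smul (m i)
  have hD_compact : IsCompactOperator D := lp.isCompactOperator_of_diagonal hmR_compact hmR hD
  refine ⟨hD_compact, ?_⟩
  rintro W V hW hV ω υ - - ⟨βW, hβW⟩ ⟨βV, hβV⟩ M hM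
  have hBW := isBesselFamily_ofReal_smul_fproj hW hβW
  have hBV := isBesselFamily_ofReal_smul_fproj hV hβV
  have hM_eq : ⇑M = adjoint hBV.analysisOp ∘ D ∘ hBW.analysisOp := by
    refine funext fun x => (hBV.adjoint_analysisOp_apply ?_).symm
    convert hM x using 2 with i
    rw [adjoint_ofReal_smul_fproj, Function.comp_apply, hD]
    simp [smul_smul]
  rw [hM_eq]
  exact (hD_compact.comp_clm hBW.analysisOp).clm_comp _

/-- if `m ∈ ℓ∞(I)` and `R ∈ C₀(I,B(H))` consists of finite-rank operators of
uniformly bounded rank, then `D_{mR}` is compact and every `(m,R)`-Bessel fusion multiplier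
`M_{mR,V,W}` is compact. -/
theorem multiplier_compact_of_C0_operator_family
    {H : Type*} [NormedAddCommGroup H] [InnerProductSpace ℂ H] [CompleteSpace H]
    [TopologicalSpace.SeparableSpace H]
    {I : Type*} [Countable I]
    (m : I → ℂ)
    (hm : BddAbove (Set.range fun i => ‖m i‖))
    (R : I → H →L[ℂ] H) (hR : BddAbove (Set.range fun i => ‖R i‖))
    (hR0 : ∀ ε : ℝ, 0 < ε → ∃ F : Finset I, ∀ i ∉ F, ‖R i‖ < ε)
    (hfin : ∀ i, FiniteDimensional ℂ ↥(LinearMap.range (R i : H →ₗ[ℂ] H)))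
    (n : ℕ) (hrank : ∀ i, Module.finrank ℂ ↥(LinearMap.range (R i : H →ₗ[ℂ] H)) ≤ n)
    -- the diagonal operator D_{mR}
    (D : lp (fun _ : I => H) 2 →L[ℂ] lp (fun _ : I => H) 2)
    (hD : ∀ (x : lp (fun _ : I => H) 2) (i : I), D x i = m i • (R i) (x i)) :
    IsCompactOperator ⇑D ∧
    -- and every (m,R)-Bessel fusion multiplier is compact
    (∀ (W V : I → Submodule ℂ H)
      (hW : ∀ i, IsClosed ((W i) : Set H)) (hV : ∀ i, IsClosed ((V i) : Set H))
      (ω υ : I → ℝ),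
      (∀ i, 0 ≤ ω i ∧ (ω i = 0 ↔ W i = ⊥)) →
      (∀ i, 0 ≤ υ i ∧ (υ i = 0 ↔ V i = ⊥)) →
      (∃ βW : ℝ, ∀ x : H, ∃ s : ℝ,
        HasSum (fun i => ω i ^ 2 * ‖fproj (W i) (hW i) x‖ ^ 2) s ∧ s ≤ βW * ‖x‖ ^ 2) →
      (∃ βV : ℝ, ∀ x : H, ∃ s : ℝ,
        HasSum (fun i => υ i ^ 2 * ‖fproj (V i) (hV i) x‖ ^ 2) s ∧ s ≤ βV * ‖x‖ ^ 2) →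
      ∀ M : H →L[ℂ] H,
        (∀ x : H, HasSum
          (fun i => m i • (υ i * ω i) • fproj (V i) (hV i) ((R i) (fproj (W i) (hW i) x)))
          (M x)) →
        IsCompactOperator ⇑M) :=
  multiplier_compact_of_C0_operator_family_general m hm R hR0 hfin D hD
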